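/- Suppose A₁,…,A_f are v×v (0,1)-matrices, each the incidence matrix of a symmetric group divisible design with parameters (v,k,m,n,λ₁,λ₂) (v = mn), such that A_i(I_m⊗J_n) = (I_m⊗J_n)A_i = (k/m)·J_v for all i, and for all distinct i,j the matrix A_iA_jᵀ has exactly two distinct entries σ ≠ τ. Define A_{i,j} := (1/(σ−τ))·(A_iA_jᵀ − τJ_v). Then the matrices A_{i,j} form a linked system of symmetric group divisible designs with parameters (v, g(k), m, n, g(λ₁), g(λ₂)) and linking parameters g(σ), g(τ), where g(x) := ((k−λ₁)x + (λ₁−λ₂)k²/m + λ₂k² − 2τk² + τ²v)/(σ−τ)². -/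

import Mathlib

/-! Block regularity gives `A_i J = J A_i = k J`, so multiplying `A_i`, `A_iᵀ` by `J` or
`I_m ⊗ J_n` always yields a multiple of `J`. Hence `(A_i A_jᵀ)(A_j A_lᵀ) = A_i (A_jᵀ A_j) A_lᵀ` is
`(k - λ₁) A_i A_lᵀ` plus a multiple of `J`, and `B_{ij} B_{jl} = c A_i A_lᵀ + d J` where
`g x = c x + d`. For `l = i` this is the Gram matrix of a GDD with parameters transformed by `g`;
for `l ≠ i` substitute `A_i A_lᵀ = (σ - τ) B_{il} + τ J`. -/

open Matrix

noncomputable section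

/-- The all-ones matrix `J_v` (with `v = m·n`, indexed by `Fin m × Fin n`). -/
def Jmat (m n : ℕ) : Matrix (Fin m × Fin n) (Fin m × Fin n) ℝ :=
  Matrix.of fun _ _ => 1

/-- The block-diagonal matrix `I_m ⊗ J_n` (indexed by `Fin m × Fin n`). -/
def Kmat (m n : ℕ) : Matrix (Fin m × Fin n) (Fin m × Fin n) ℝ :=
  Matrix.of fun p q => if p.1 = q.1 then 1 else 0

def gddMat (m n : ℕ) (k l1 l2 : ℝ) : Matrix (Fin m × Fin n) (Fin m × Fin n) ℝ :=
  k • 1 + l1 • (Kmat m n - 1) + l2 • (Jmat m n - Kmat m n)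

variable {m n : ℕ} {X Y Z : Matrix (Fin m × Fin n) (Fin m × Fin n) ℝ}

theorem Jmat_transpose : (Jmat m n)ᵀ = Jmat m n := rfl

theorem Kmat_transpose : (Kmat m n)ᵀ = Kmat m n := by
  ext p q
  simp only [Kmat, transpose_apply, of_apply, eq_comm]

theorem Jmat_mul_Jmat : Jmat m n * Jmat m n = ((m : ℝ) * n) • Jmat m n := by
  ext p q
  simp [Jmat, mul_apply]

theorem Kmat_mul_Jmat : Kmat m n * Jmat m n = (n : ℝ) • Jmat m n := by
  ext p q
  simp only [Kmat, Jmat, mul_apply, of_apply, mul_one, Fintype.sum_prod_type, Matrix.smul_apply,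
    smul_eq_mul]
  rw [Finset.sum_comm]
  simp

theorem Kmat_mul_transpose {c : ℝ} (h : X * Kmat m n = c • Jmat m n) :
    Kmat m n * Xᵀ = c • Jmat m n := by
  rw [← Kmat_transpose, ← transpose_mul, h, transpose_smul, Jmat_transpose]

theorem transpose_mul_Kmat {c : ℝ} (h : Kmat m n * X = c • Jmat m n) :
    Xᵀ * Kmat m n = c • Jmat m n := by
  rw [← Kmat_transpose, ← transpose_mul, h, transpose_smul, Jmat_transpose]

theorem Jmat_mul_transpose {c : ℝ} (h : X * Jmat m n = c • Jmat m n) :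
    Jmat m n * Xᵀ = c • Jmat m n := by
  rw [← Jmat_transpose, ← transpose_mul, h, transpose_smul, Jmat_transpose]

theorem transpose_mul_Jmat {c : ℝ} (h : Jmat m n * X = c • Jmat m n) :
    Xᵀ * Jmat m n = c • Jmat m n := by
  rw [← Jmat_transpose, ← transpose_mul, h, transpose_smul, Jmat_transpose]

theorem mul_Jmat_of_mul_Kmat {c : ℝ} (hn : (n : ℝ) ≠ 0) (h : X * Kmat m n = c • Jmat m n) :
    X * Jmat m n = ((m : ℝ) * c) • Jmat m n := by
  refine smul_right_injective _ hn ?_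
  calc (n : ℝ) • (X * Jmat m n) = X * Kmat m n * Jmat m n := by
        rw [Matrix.mul_assoc, Kmat_mul_Jmat, Matrix.mul_smul]
    _ = (n : ℝ) • (((m : ℝ) * c) • Jmat m n) := by
        rw [h, Matrix.smul_mul, Jmat_mul_Jmat, smul_smul, smul_smul]
        congr 1
        ring

theorem Jmat_mul_of_Kmat_mul {c : ℝ} (hn : (n : ℝ) ≠ 0) (h : Kmat m n * X = c • Jmat m n) :
    Jmat m n * X = ((m : ℝ) * c) • Jmat m n := by
  simpa only [transpose_transpose] using
    Jmat_mul_transpose (mul_Jmat_of_mul_Kmat hn (transpose_mul_Kmat h))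

theorem gddMat_affine (a b k l1 l2 : ℝ) :
    gddMat m n (a * k + b) (a * l1 + b) (a * l2 + b) = a • gddMat m n k l1 l2 + b • Jmat m n := by
  unfold gddMat
  module

theorem gddMat_mul {k l1 l2 c d : ℝ} (hK : Kmat m n * X = c • Jmat m n)
    (hJ : Jmat m n * X = d • Jmat m n) :
    gddMat m n k l1 l2 * X = (k - l1) • X + (l1 * c + l2 * (d - c)) • Jmat m n := by
  simp only [gddMat, add_mul, sub_mul, Matrix.smul_mul, Matrix.one_mul, hK, hJ]
  module

theorem mul_transpose_mul_mul_transpose {A B C : Matrix (Fin m × Fin n) (Fin m × Fin n) ℝ}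
    {k l1 l2 a c d : ℝ} (hB : Bᵀ * B = gddMat m n k l1 l2) (hA : A * Jmat m n = a • Jmat m n)
    (hKC : Kmat m n * Cᵀ = c • Jmat m n) (hJC : Jmat m n * Cᵀ = d • Jmat m n) :
    A * Bᵀ * (B * Cᵀ) = (k - l1) • (A * Cᵀ) + ((l1 * c + l2 * (d - c)) * a) • Jmat m n := by
  rw [Matrix.mul_assoc, ← Matrix.mul_assoc Bᵀ, hB, gddMat_mul hKC hJC, Matrix.mul_add,
    Matrix.mul_smul, Matrix.mul_smul, hA, smul_smul]

theorem smul_shift_mul_smul_shift {r τ a b s : ℝ} (hXY : X * Y = a • Z + b • Jmat m n)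
    (hX : X * Jmat m n = s • Jmat m n) (hY : Jmat m n * Y = s • Jmat m n) :
    (r • (X - τ • Jmat m n)) * (r • (Y - τ • Jmat m n)) =
      (r ^ 2 * a) • Z + (r ^ 2 * (b - 2 * τ * s + τ ^ 2 * ((m : ℝ) * n))) • Jmat m n := by
  simp only [Matrix.smul_mul, Matrix.mul_smul, sub_mul, Matrix.mul_sub, hXY, hX, hY,
    Jmat_mul_Jmat]
  match_scalars <;> ring

theorem smul_shift_transpose {A B : Matrix (Fin m × Fin n) (Fin m × Fin n) ℝ} (r τ : ℝ) :
    (r • (A * Bᵀ - τ • Jmat m n))ᵀ = r • (B * Aᵀ - τ • Jmat m n) := by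
  rw [transpose_smul, transpose_sub, transpose_mul, transpose_transpose, transpose_smul,
    Jmat_transpose]

theorem smul_shift_apply_eq_zero_or_one {σ τ : ℝ} (hστ : σ ≠ τ) (p q : Fin m × Fin n)
    (hX : X p q = σ ∨ X p q = τ) :
    ((σ - τ)⁻¹ • (X - τ • Jmat m n)) p q = 0 ∨ ((σ - τ)⁻¹ • (X - τ • Jmat m n)) p q = 1 := by
  simp only [Matrix.smul_apply, Matrix.sub_apply, smul_eq_mul, Jmat, of_apply, mul_one]
  rcases hX with h | h <;> rw [h]
  · exact Or.inr (inv_mul_cancel₀ (sub_ne_zero.mpr hστ))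
  · exact Or.inl (by simp)

theorem gram_shift_mul_gram_shift {A B C : Matrix (Fin m × Fin n) (Fin m × Fin n) ℝ}
    {k l1 l2 r τ : ℝ} (hm : (m : ℝ) ≠ 0) (hn : (n : ℝ) ≠ 0) (hB : Bᵀ * B = gddMat m n k l1 l2)
    (hAK : A * Kmat m n = (k / m) • Jmat m n) (hKB : Kmat m n * B = (k / m) • Jmat m n)
    (hCK : C * Kmat m n = (k / m) • Jmat m n) :
    (r • (A * Bᵀ - τ • Jmat m n)) * (r • (B * Cᵀ - τ • Jmat m n)) =
      (r ^ 2 * (k - l1)) • (A * Cᵀ) + (r ^ 2 * ((l1 * (k / m) + l2 * (k - k / m)) * k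
        - 2 * τ * (k * k) + τ ^ 2 * ((m : ℝ) * n))) • Jmat m n := by
  have hAJ : A * Jmat m n = k • Jmat m n := by
    rw [mul_Jmat_of_mul_Kmat hn hAK, mul_div_cancel₀ k hm]
  have hJB : Jmat m n * B = k • Jmat m n := by
    rw [Jmat_mul_of_Kmat_mul hn hKB, mul_div_cancel₀ k hm]
  have hJCT : Jmat m n * Cᵀ = k • Jmat m n := by
    rw [Jmat_mul_transpose (mul_Jmat_of_mul_Kmat hn hCK), mul_div_cancel₀ k hm]
  refine smul_shift_mul_smul_shift
    (mul_transpose_mul_mul_transpose hB hAJ (Kmat_mul_transpose hCK) hJCT) ?_ ?_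
  · rw [Matrix.mul_assoc, transpose_mul_Jmat hJB, Matrix.mul_smul, hAJ, smul_smul]
  · rw [← Matrix.mul_assoc, hJB, Matrix.smul_mul, hJCT, smul_smul]

theorem stmt15_general (f m n : ℕ) (hm : 2 ≤ m) (hn : 2 ≤ n)
    (k l1 l2 σ τ : ℝ) (hστ : σ ≠ τ)
    (A : Fin f → Matrix (Fin m × Fin n) (Fin m × Fin n) ℝ)
    (hGDD : ∀ i, A i * (A i)ᵀ =
        k • (1 : Matrix (Fin m × Fin n) (Fin m × Fin n) ℝ)
          + l1 • (Kmat m n - 1) + l2 • (Jmat m n - Kmat m n) ∧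
      (A i)ᵀ * A i =
        k • (1 : Matrix (Fin m × Fin n) (Fin m × Fin n) ℝ)
          + l1 • (Kmat m n - 1) + l2 • (Jmat m n - Kmat m n))
    (hblock : ∀ i, A i * Kmat m n = (k / m) • Jmat m n ∧
      Kmat m n * A i = (k / m) • Jmat m n)
    (htwo : ∀ i j, i ≠ j → ∀ p q,
      (A i * (A j)ᵀ) p q = σ ∨ (A i * (A j)ᵀ) p q = τ)
    (B : Fin f → Fin f → Matrix (Fin m × Fin n) (Fin m × Fin n) ℝ)
    (hB : ∀ i j, i ≠ j → B i j = (σ - τ)⁻¹ • (A i * (A j)ᵀ - τ • Jmat m n))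
    (g : ℝ → ℝ)
    (hg : ∀ x, g x = ((k - l1) * x + (l1 - l2) * k ^ 2 / m + l2 * k ^ 2
      - 2 * τ * k ^ 2 + τ ^ 2 * ((m : ℝ) * n)) / (σ - τ) ^ 2) :
    (∀ i j, i ≠ j → ∀ p q, B i j p q = 0 ∨ B i j p q = 1) ∧
    (∀ i j, i ≠ j → (B i j)ᵀ = B j i) ∧
    (∀ i j, i ≠ j → B i j * (B i j)ᵀ =
      g k • (1 : Matrix (Fin m × Fin n) (Fin m × Fin n) ℝ)
        + g l1 • (Kmat m n - 1) + g l2 • (Jmat m n - Kmat m n)) ∧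
    (∀ i j l, i ≠ j → j ≠ l → i ≠ l →
      B i j * B j l = g σ • B i l + g τ • (Jmat m n - B i l)) := by
  have hm0 : (m : ℝ) ≠ 0 := Nat.cast_ne_zero.mpr (by omega)
  have hn0 : (n : ℝ) ≠ 0 := Nat.cast_ne_zero.mpr (by omega)
  have hστ' : σ - τ ≠ 0 := sub_ne_zero.mpr hστ
  set c := (σ - τ)⁻¹ ^ 2 * (k - l1) with hc
  set d := (σ - τ)⁻¹ ^ 2 * ((l1 * (k / m) + l2 * (k - k / m)) * k - 2 * τ * (k * k)
    + τ ^ 2 * ((m : ℝ) * n)) with hd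
  have hg_affine : ∀ x, g x = c * x + d := fun x => by
    rw [hg, hc, hd]
    field_simp
    ring
  have hBB : ∀ i j l, i ≠ j → j ≠ l → B i j * B j l = c • (A i * (A l)ᵀ) + d • Jmat m n := by
    intro i j l hij hjl
    rw [hB i j hij, hB j l hjl]
    exact gram_shift_mul_gram_shift hm0 hn0 (hGDD j).2 (hblock i).1 (hblock j).2 (hblock l).1
  have hT : ∀ i j, i ≠ j → (B i j)ᵀ = B j i := fun i j hij => by
    rw [hB i j hij, hB j i hij.symm, smul_shift_transpose]
  refine ⟨fun i j hij p q => ?_, hT, fun i j hij => ?_, fun i j l hij hjl hil => ?_⟩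
  · rw [hB i j hij]
    exact smul_shift_apply_eq_zero_or_one hστ p q (htwo i j hij p q)
  · rw [hT i j hij, hBB i j i hij hij.symm, (hGDD i).1, hg_affine, hg_affine, hg_affine]
    exact (gddMat_affine c d k l1 l2).symm
  · have hA : A i * (A l)ᵀ = (σ - τ) • B i l + τ • Jmat m n := by
      rw [hB i l hil, smul_smul, mul_inv_cancel₀ hστ', one_smul, sub_add_cancel]
    rw [hBB i j l hij hjl, hA, hg_affine, hg_affine]
    module

/-- From symmetric GDDs `A₁,…,A_f` with block row/column sums `k/m` such that each
`A_iA_jᵀ` (i ≠ j) has exactly two entries `σ ≠ τ`, the matrices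
`A_{i,j} = (A_iA_jᵀ − τJ)/(σ−τ)` form a linked system of symmetric GDDs with
parameters `(v, g(k), m, n, g(λ₁), g(λ₂))` and linking parameters `g(σ), g(τ)`,
where `g(x) = ((k−λ₁)x + (λ₁−λ₂)k²/m + λ₂k² − 2τk² + τ²v)/(σ−τ)²`. -/
theorem stmt15 (f m n : ℕ) (hm : 2 ≤ m) (hn : 2 ≤ n)
    (k l1 l2 σ τ : ℝ) (hστ : σ ≠ τ)
    (A : Fin f → Matrix (Fin m × Fin n) (Fin m × Fin n) ℝ)
    (h01 : ∀ i p q, A i p q = 0 ∨ A i p q = 1)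
    (hGDD : ∀ i, A i * (A i)ᵀ =
        k • (1 : Matrix (Fin m × Fin n) (Fin m × Fin n) ℝ)
          + l1 • (Kmat m n - 1) + l2 • (Jmat m n - Kmat m n) ∧
      (A i)ᵀ * A i =
        k • (1 : Matrix (Fin m × Fin n) (Fin m × Fin n) ℝ)
          + l1 • (Kmat m n - 1) + l2 • (Jmat m n - Kmat m n))
    (hblock : ∀ i, A i * Kmat m n = (k / m) • Jmat m n ∧
      Kmat m n * A i = (k / m) • Jmat m n)
    (htwo : ∀ i j, i ≠ j → ∀ p q,
      (A i * (A j)ᵀ) p q = σ ∨ (A i * (A j)ᵀ) p q = τ)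
    (B : Fin f → Fin f → Matrix (Fin m × Fin n) (Fin m × Fin n) ℝ)
    (hB : ∀ i j, i ≠ j → B i j = (σ - τ)⁻¹ • (A i * (A j)ᵀ - τ • Jmat m n))
    (g : ℝ → ℝ)
    (hg : ∀ x, g x = ((k - l1) * x + (l1 - l2) * k ^ 2 / m + l2 * k ^ 2
      - 2 * τ * k ^ 2 + τ ^ 2 * ((m : ℝ) * n)) / (σ - τ) ^ 2) :
    (∀ i j, i ≠ j → ∀ p q, B i j p q = 0 ∨ B i j p q = 1) ∧
    (∀ i j, i ≠ j → (B i j)ᵀ = B j i) ∧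
    (∀ i j, i ≠ j → B i j * (B i j)ᵀ =
      g k • (1 : Matrix (Fin m × Fin n) (Fin m × Fin n) ℝ)
        + g l1 • (Kmat m n - 1) + g l2 • (Jmat m n - Kmat m n)) ∧
    (∀ i j l, i ≠ j → j ≠ l → i ≠ l →
      B i j * B j l = g σ • B i l + g τ • (Jmat m n - B i l)) :=
  stmt15_general f m n hm hn k l1 l2 σ τ hστ A hGDD hblock htwo B hB g hg

end
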